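/- The assignment L_m x_k = (−k + σm)x_{k+m}, L_m y_k = (−k + m(σ + 1/2))y_{k+m}, I_r x_k = −2t^{2r}(σ+1)x_{k+r}, I_r y_k = −t^{2r}(2σ+1)y_{k+r}, G_p x_k = t^{2p}y_{k+p}, G_p y_k = (−t)^{2p}(−k + (2σ+1)p)x_{k+p}, for k ∈ (1/2)ℤ, defines a module structure over the twisted N=2 superconformal algebra on the ℤ/2-graded space A_t(σ) with even basis {x_k} and odd basis {y_k}. -/

import Mathlib

/-! Each operator sends the basis vector of doubled index `k` to a multiple of the one of index
`k + a`, so both sides of a relation, evaluated at a doubled index `j`, are the same coordinate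
of `w` times coefficients that are polynomials in `j`, `σ` and powers of `t`. Since `t = ±1`,
those powers depend only on the parity of the exponent, and each relation becomes a polynomial
identity. -/

/- The intermediate series module `A_t(σ)` has basis `{x_k, y_k : k ∈ (1/2)ℤ}`
(`x_k` even, `y_k` odd); indices are encoded by their doubles, so the even part is
`ℤ →₀ ℂ` (coefficient at doubled index `k` for `x_{k/2}`) and similarly the odd
part.  Operator indices are likewise doubled (`a = 2r` odd for `I_r`, `a = 2p` for
`G_p`).  The claim is that the given action satisfies all the bracket relations of
the twisted N=2 superconformal algebra, i.e. defines a 𝒯-module structure. -/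

noncomputable def ALop (σ : ℂ) (m : ℤ) (w : (ℤ →₀ ℂ) × (ℤ →₀ ℂ)) :
    (ℤ →₀ ℂ) × (ℤ →₀ ℂ) :=
  (w.1.sum fun k c => Finsupp.single (k + 2 * m) ((-(k : ℂ) / 2 + σ * m) * c),
   w.2.sum fun k c => Finsupp.single (k + 2 * m) ((-(k : ℂ) / 2 + (σ + 1/2) * m) * c))

noncomputable def AIop (t σ : ℂ) (a : ℤ) (w : (ℤ →₀ ℂ) × (ℤ →₀ ℂ)) :
    (ℤ →₀ ℂ) × (ℤ →₀ ℂ) :=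
  (w.1.sum fun k c => Finsupp.single (k + a) ((-2 * t ^ a * (σ + 1)) * c),
   w.2.sum fun k c => Finsupp.single (k + a) ((-(t ^ a) * (2 * σ + 1)) * c))

noncomputable def AGop (t σ : ℂ) (a : ℤ) (w : (ℤ →₀ ℂ) × (ℤ →₀ ℂ)) :
    (ℤ →₀ ℂ) × (ℤ →₀ ℂ) :=
  (w.2.sum fun k c =>
      Finsupp.single (k + a) (((-t) ^ a * (-(k : ℂ) / 2 + (2 * σ + 1) * ((a : ℂ) / 2))) * c),
   w.1.sum fun k c => Finsupp.single (k + a) (t ^ a * c))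

theorem Finsupp.sum_single_add_mul_apply {G R : Type*} [AddGroup G] [Semiring R]
    (f : G → R) (a j : G) (w : G →₀ R) :
    (w.sum fun k c => single (k + a) (f k * c)) j = f (j - a) * w (j - a) := by
  classical
  rw [sum_apply, Finsupp.sum, Finset.sum_eq_single (j - a)]
  · simp
  · intro k _ hk
    rw [single_eq_of_ne (by rintro rfl; simp at hk)]
  · intro hw
    rw [notMem_support_iff.mp hw, mul_zero, single_zero, coe_zero, Pi.zero_apply]

section SignPowers

variable {α : Type*} [DivisionMonoid α] [HasDistribNeg α]

theorem neg_one_zpow_eq_of_even_add {a c : ℤ} (h : Even (a + c)) :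
    (-1 : α) ^ c = (-1) ^ a := by
  rcases Int.even_or_odd a with ha | ha
  · have hc : Even c := by simpa using h.sub ha
    rw [ha.neg_one_zpow, hc.neg_one_zpow]
  · have hc : Odd c := by simpa using h.sub_odd ha
    rw [ha.neg_one_zpow, hc.neg_one_zpow]

theorem neg_one_zpow_eq_neg_of_odd_add {a c : ℤ} (h : Odd (a + c)) :
    (-1 : α) ^ c = -(-1) ^ a := by
  rcases Int.even_or_odd a with ha | ha
  · have hc : Odd c := by simpa using h.sub_even ha
    rw [ha.neg_one_zpow, hc.neg_one_zpow]
  · have hc : Even c := by simpa using h.sub_odd ha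
    rw [ha.neg_one_zpow, hc.neg_one_zpow, neg_neg]

end SignPowers

theorem zpow_add_two_mul_of_sq_eq_one {G₀ : Type*} [GroupWithZero G₀] {t : G₀}
    (ht : t ^ 2 = 1) (a m : ℤ) : t ^ (a + 2 * m) = t ^ a := by
  have ht0 : t ≠ 0 := by rintro rfl; simp at ht
  rw [zpow_add₀ ht0, zpow_mul, zpow_ofNat, ht, one_zpow, mul_one]

section Relations

variable {t : ℂ} (σ : ℂ)

theorem ALop_sub_ALop (m n : ℤ) (w : (ℤ →₀ ℂ) × (ℤ →₀ ℂ)) :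
    ALop σ m (ALop σ n w) - ALop σ n (ALop σ m w)
      = ((m - n : ℤ) : ℂ) • ALop σ (m + n) w := by
  ext j <;>
    simp only [ALop, Prod.fst_sub, Prod.snd_sub, Prod.smul_fst, Prod.smul_snd,
      Finsupp.sub_apply, Finsupp.smul_apply, smul_eq_mul, Finsupp.sum_single_add_mul_apply] <;>
    push_cast <;> ring_nf

theorem ALop_sub_AIop (ht : t ^ 2 = 1) (m a : ℤ) (w : (ℤ →₀ ℂ) × (ℤ →₀ ℂ)) :
    ALop σ m (AIop t σ a w) - AIop t σ a (ALop σ m w)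
      = (-(a : ℂ) / 2) • AIop t σ (a + 2 * m) w := by
  ext j <;>
    simp only [ALop, AIop, Prod.fst_sub, Prod.snd_sub, Prod.smul_fst, Prod.smul_snd,
      Finsupp.sub_apply, Finsupp.smul_apply, smul_eq_mul, Finsupp.sum_single_add_mul_apply,
      zpow_add_two_mul_of_sq_eq_one ht] <;>
    push_cast <;> ring_nf

theorem AIop_sub_AIop (a c : ℤ) (w : (ℤ →₀ ℂ) × (ℤ →₀ ℂ)) :
    AIop t σ a (AIop t σ c w) - AIop t σ c (AIop t σ a w) = 0 := by
  ext j <;>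
    simp only [AIop, Prod.fst_sub, Prod.snd_sub, Prod.fst_zero, Prod.snd_zero,
      Finsupp.sub_apply, Finsupp.coe_zero, Pi.zero_apply, Finsupp.sum_single_add_mul_apply] <;>
    ring_nf

theorem ALop_sub_AGop (ht : t ^ 2 = 1) (m a : ℤ) (w : (ℤ →₀ ℂ) × (ℤ →₀ ℂ)) :
    ALop σ m (AGop t σ a w) - AGop t σ a (ALop σ m w)
      = ((m : ℂ) / 2 - (a : ℂ) / 2) • AGop t σ (a + 2 * m) w := by
  have hnt : (-t) ^ 2 = 1 := by rw [neg_sq, ht]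
  ext j <;>
    simp only [ALop, AGop, Prod.fst_sub, Prod.snd_sub, Prod.smul_fst, Prod.smul_snd,
      Finsupp.sub_apply, Finsupp.smul_apply, smul_eq_mul, Finsupp.sum_single_add_mul_apply,
      zpow_add_two_mul_of_sq_eq_one ht, zpow_add_two_mul_of_sq_eq_one hnt] <;>
    push_cast <;> ring_nf

theorem AIop_sub_AGop (ht : t ≠ 0) {a : ℤ} (ha : Odd a) (c : ℤ)
    (w : (ℤ →₀ ℂ) × (ℤ →₀ ℂ)) :
    AIop t σ a (AGop t σ c w) - AGop t σ c (AIop t σ a w) = AGop t σ (a + c) w := by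
  ext j <;>
    simp only [AIop, AGop, Prod.fst_sub, Prod.snd_sub, Finsupp.sub_apply,
      Finsupp.sum_single_add_mul_apply, zpow_add₀ ht, zpow_add₀ (neg_ne_zero.2 ht),
      ha.neg_zpow] <;>
    push_cast <;> ring_nf

theorem AGop_add_AGop_of_even (ht : t = 1 ∨ t = -1) {a c : ℤ} (hac : Even (a + c))
    (w : (ℤ →₀ ℂ) × (ℤ →₀ ℂ)) :
    AGop t σ a (AGop t σ c w) + AGop t σ c (AGop t σ a w)
      = ((-1 : ℂ) ^ a * 2) • ALop σ ((a + c) / 2) w := by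
  have hc := neg_one_zpow_eq_of_even_add (α := ℂ) hac
  obtain ⟨d, hd⟩ := hac
  obtain rfl : c = 2 * d - a := by omega
  rw [show (a + (2 * d - a)) / 2 = d by omega]
  rcases ht with rfl | rfl <;>
    ext j <;>
    simp only [ALop, AGop, neg_neg, one_zpow, Prod.fst_add, Prod.snd_add, Prod.smul_fst,
      Prod.smul_snd, Finsupp.add_apply, Finsupp.smul_apply, smul_eq_mul,
      Finsupp.sum_single_add_mul_apply, hc] <;>
    push_cast <;> ring_nf

theorem AGop_add_AGop_of_odd (ht : t = 1 ∨ t = -1) {a c : ℤ} (hac : Odd (a + c))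
    (w : (ℤ →₀ ℂ) × (ℤ →₀ ℂ)) :
    AGop t σ a (AGop t σ c w) + AGop t σ c (AGop t σ a w)
      = ((-1 : ℂ) ^ (a + 1) * (((a : ℂ) - (c : ℂ)) / 2)) • AIop t σ (a + c) w := by
  have hc := neg_one_zpow_eq_neg_of_odd_add (α := ℂ) hac
  have hsum : (-1 : ℂ) ^ (a + c) = -1 := hac.neg_one_zpow
  have ha1 : (-1 : ℂ) ^ (a + 1) = -(-1) ^ a := by
    rw [zpow_add₀ (by norm_num), zpow_one, mul_neg_one]
  rcases ht with rfl | rfl <;>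
    ext j <;>
    simp only [AIop, AGop, neg_neg, one_zpow, Prod.fst_add, Prod.snd_add, Prod.smul_fst,
      Prod.smul_snd, Finsupp.add_apply, Finsupp.smul_apply, smul_eq_mul,
      Finsupp.sum_single_add_mul_apply, hc, hsum, ha1] <;>
    push_cast <;> ring_nf

end Relations

theorem stmt18 (t σ : ℂ) (ht : t = 1 ∨ t = -1) :
    (∀ (m n : ℤ) (w : (ℤ →₀ ℂ) × (ℤ →₀ ℂ)),
        ALop σ m (ALop σ n w) - ALop σ n (ALop σ m w)
          = ((m - n : ℤ) : ℂ) • ALop σ (m + n) w) ∧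
    (∀ (m a : ℤ), Odd a → ∀ w : (ℤ →₀ ℂ) × (ℤ →₀ ℂ),
        ALop σ m (AIop t σ a w) - AIop t σ a (ALop σ m w)
          = (-(a : ℂ) / 2) • AIop t σ (a + 2 * m) w) ∧
    (∀ a c : ℤ, Odd a → Odd c → ∀ w : (ℤ →₀ ℂ) × (ℤ →₀ ℂ),
        AIop t σ a (AIop t σ c w) - AIop t σ c (AIop t σ a w) = 0) ∧
    (∀ (m a : ℤ) (w : (ℤ →₀ ℂ) × (ℤ →₀ ℂ)),
        ALop σ m (AGop t σ a w) - AGop t σ a (ALop σ m w)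
          = ((m : ℂ) / 2 - (a : ℂ) / 2) • AGop t σ (a + 2 * m) w) ∧
    (∀ a c : ℤ, Odd a → ∀ w : (ℤ →₀ ℂ) × (ℤ →₀ ℂ),
        AIop t σ a (AGop t σ c w) - AGop t σ c (AIop t σ a w) = AGop t σ (a + c) w) ∧
    (∀ a c : ℤ, Even (a + c) → ∀ w : (ℤ →₀ ℂ) × (ℤ →₀ ℂ),
        AGop t σ a (AGop t σ c w) + AGop t σ c (AGop t σ a w)
          = ((-1 : ℂ) ^ a * 2) • ALop σ ((a + c) / 2) w) ∧
    (∀ a c : ℤ, Odd (a + c) → ∀ w : (ℤ →₀ ℂ) × (ℤ →₀ ℂ),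
        AGop t σ a (AGop t σ c w) + AGop t σ c (AGop t σ a w)
          = ((-1 : ℂ) ^ (a + 1) * (((a : ℂ) - (c : ℂ)) / 2)) • AIop t σ (a + c) w) := by
  have hsq : t ^ 2 = 1 := by rcases ht with rfl | rfl <;> norm_num
  have ht0 : t ≠ 0 := by rintro rfl; simp at hsq
  exact ⟨ALop_sub_ALop σ, fun m a _ => ALop_sub_AIop σ hsq m a,
    fun a c _ _ => AIop_sub_AIop σ a c, ALop_sub_AGop σ hsq,
    fun a c ha => AIop_sub_AGop σ ht0 ha c, fun a c => AGop_add_AGop_of_even σ ht,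
    fun a c => AGop_add_AGop_of_odd σ ht⟩
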